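/- Let q be a prime power, let c, h, M be positive integers with c < M/2, and let r : 𝔽_q → 𝔽_q be a function. Suppose F(X), G(X) ∈ 𝔽_q[X] with deg(F) < cq and deg(G) < cq are both r-twisted (h, M)-pseudopolynomials, and let k be an integer with k > (M/(M − 2c))·(h + 1). Then there exist polynomials A(X), B(X) ∈ 𝔽_q[X], not both zero, each of degree less than Mq and pseudodegree at most k, such that A(X)·F(X) = B(X)·G(X). -/

import Mathlib

/-!
Write `Λ = X ^ q - X` and look for `A = ∑_{i < M - c} aᵢ Λ^i`, `B = ∑ bᵢ Λ^i` with
`deg aᵢ, deg bᵢ ≤ k`. Translation by `α ∈ 𝔽_q` fixes `Λ`, so every Hasse derivative of such an `A`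
agrees on `𝔽_q` with a polynomial of degree `≤ k`: `A` has pseudodegree `≤ k`. On `𝔽_q`, the `ℓ`-th
Hasse derivative of `A F - B G` is `r` times a polynomial of degree `≤ k + h` depending linearly on
`(A, B)`. Asking these to vanish for `ℓ < M` imposes `M (k + h + 1)` linear conditions on
`2 (M - c)(k + 1)` unknowns, and the bound on `k` makes the unknowns win. For `k < q` the digits
`aᵢ` are determined by `A`, so a nonzero solution gives `(A, B) ≠ 0`. Then `A F - B G` vanishes to
order `M` at all `q` points of `𝔽_q` while having degree `< M q`, so it is zero.
For `k ≥ q` every polynomial has pseudodegree `≤ k`, and `(A, B) = (G, F)` works (or `(1, 0)` if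
`F = 0`).
-/

open Polynomial

/-- `A ∈ 𝔽_q[X]` has pseudodegree at most `k`: for every `ℓ ≥ 0`, the remainder of the
`ℓ`-th Hasse derivative of `A` upon division by `Λ(X) = X^q - X` has degree at most `k`. -/
def PdegLE {F : Type*} [Field F] (q : ℕ) (A : F[X]) (k : ℕ) : Prop :=
  ∀ ℓ : ℕ, ((hasseDeriv ℓ A) %ₘ (X ^ q - X)).degree ≤ (k : WithBot ℕ)

/-- `P ∈ 𝔽_q[X]` is an `r`-twisted `(h, M)`-pseudopolynomial: for every `ℓ < M` there is
`U_ℓ ∈ 𝔽_q[X]` of degree at most `h` with `P^{[ℓ]}(α) = r(α)·U_ℓ(α)` for all `α ∈ 𝔽_q`. -/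
def Twisted {F : Type*} [Field F] (r : F → F) (h M : ℕ) (P : F[X]) : Prop :=
  ∀ ℓ < M, ∃ U : F[X], U.degree ≤ (h : WithBot ℕ) ∧
    ∀ α : F, (hasseDeriv ℓ P).eval α = r α * U.eval α

open Finset

section Generic

variable {R : Type*} [CommRing R]

lemma degree_hasseDeriv_le (n : ℕ) (p : R[X]) : (hasseDeriv n p).degree ≤ p.degree := by
  rcases eq_or_ne p 0 with rfl | hp
  · simp
  · rw [degree_eq_natDegree hp]
    exact degree_le_of_natDegree_le ((natDegree_hasseDeriv_le p n).trans (Nat.sub_le _ _))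

lemma degree_mul_lt_of_lt_of_le {p q : R[X]} {m n : ℕ} (hp : p.degree < m) (hq : q.degree ≤ n) :
    (p * q).degree < (m + n : ℕ) := by
  rcases eq_or_ne q 0 with rfl | hq0
  · simp
  · push_cast
    exact (degree_mul_le p q).trans_lt (WithBot.add_lt_add_of_lt_of_le (degree_ne_bot.2 hq0) hp hq)

lemma eval_hasseDeriv_mul_of_taylor_eq {P : R[X]} {α : R} (hP : taylor α P = P)
    (a : R[X]) (ℓ : ℕ) :
    (hasseDeriv ℓ (a * P)).eval α =
      (∑ xy ∈ antidiagonal ℓ, P.coeff xy.2 • hasseDeriv xy.1 a).eval α := by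
  rw [← taylor_coeff, taylor_mul, hP, coeff_mul, eval_finsetSum]
  simp [taylor_coeff, mul_comm]

lemma degree_sum_mul_pow_lt {L : R[X]} {N : ℕ} {a : Fin N → R[X]}
    (ha : ∀ i, (a i).degree < L.degree) :
    (∑ i, a i * L ^ (i : ℕ)).degree < (N * L.natDegree : ℕ) := by
  refine (degree_sum_le _ _).trans_lt ((Finset.sup_lt_iff (WithBot.bot_lt_coe _)).2 fun i _ => ?_)
  have hlt : (a i).degree < L.natDegree := (ha i).trans_le degree_le_natDegree
  refine (degree_mul_lt_of_lt_of_le hlt (degree_le_of_natDegree_le natDegree_pow_le)).trans_le ?_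
  exact_mod_cast (by nlinarith [i.2] : L.natDegree + i * L.natDegree ≤ N * L.natDegree)

lemma eq_zero_of_sum_mul_pow_eq_zero [IsDomain R] {L : R[X]} :
    ∀ {N : ℕ} {a : Fin N → R[X]}, (∀ i, (a i).degree < L.degree) →
      ∑ i, a i * L ^ (i : ℕ) = 0 → a = 0
  | 0, _, _, _ => funext fun i => i.elim0
  | N + 1, a, ha, h => by
    have hL : L ≠ 0 := fun hL => by simpa [hL] using ha 0
    simp only [Fin.sum_univ_succ, Fin.val_zero, pow_zero, mul_one, Fin.val_succ, pow_succ,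
      ← mul_assoc, ← Finset.sum_mul] at h
    have h0 : a 0 = 0 :=
      eq_zero_of_dvd_of_degree_lt ⟨-∑ i : Fin N, a i.succ * L ^ (i : ℕ), by linear_combination h⟩
        (ha 0)
    have htail : (fun i : Fin N => a i.succ) = 0 :=
      eq_zero_of_sum_mul_pow_eq_zero (fun i => ha i.succ) (by simpa [h0, hL] using h)
    funext i
    exact Fin.cases h0 (fun i => congrFun htail i) i

end Generic

section Field

variable {K : Type*} [Field K]

lemma exists_ne_zero_forall_eq_zero_of_degree_le {V : Type*} [AddCommGroup V] [Module K V]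
    [FiniteDimensional K V] {M d : ℕ} (f : Fin M → V →ₗ[K] K[X])
    (hf : ∀ i v, (f i v).degree ≤ d) (hdim : M * (d + 1) < Module.finrank K V) :
    ∃ v ≠ 0, ∀ i, f i v = 0 := by
  let Φ : V →ₗ[K] Fin M → K[X]_(d + 1) := LinearMap.pi fun i => (f i).codRestrict _ fun v =>
    mem_degreeLT.2 ((hf i v).trans_lt (by exact_mod_cast d.lt_succ_self))
  have hrank : Module.finrank K (Fin M → K[X]_(d + 1)) = M * (d + 1) := by
    simp [Module.finrank_pi_fintype, Module.finrank_eq_card_basis (degreeLT.basis K (d + 1))]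
  obtain ⟨v, hv, hv0⟩ := Submodule.exists_mem_ne_zero_of_ne_bot
    (LinearMap.ker_ne_bot_of_finrank_lt (f := Φ) (hrank ▸ hdim))
  exact ⟨v, hv0, fun i => congrArg Subtype.val (congrFun (LinearMap.mem_ker.1 hv) i)⟩

lemma Twisted.exists_fun {r : K → K} {h M : ℕ} {P : K[X]} (hP : Twisted r h M P) :
    ∃ U : ℕ → K[X], ∀ ℓ < M, (U ℓ).degree ≤ h ∧
      ∀ α, (hasseDeriv ℓ P).eval α = r α * (U ℓ).eval α := by
  choose U hU using hP
  exact ⟨fun ℓ => if hℓ : ℓ < M then U ℓ hℓ else 0, fun ℓ hℓ => by simpa [hℓ] using hU ℓ hℓ⟩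

end Field

section FiniteField

variable {F : Type*} [Field F] [Fintype F]

local notation "Λ" => (X ^ Fintype.card F - X : F[X])

lemma monic_X_pow_card_sub_X : Monic Λ :=
  monic_X_pow_sub (by rw [degree_X]; exact_mod_cast Fintype.one_lt_card (α := F))

lemma degree_X_pow_card_sub_X : degree Λ = Fintype.card F := by
  rw [degree_eq_natDegree monic_X_pow_card_sub_X.ne_zero,
    FiniteField.X_pow_card_sub_X_natDegree_eq F (Fintype.one_lt_card (α := F))]

lemma eval_X_pow_card_sub_X (α : F) : eval α Λ = 0 := by
  simp [FiniteField.pow_card]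

lemma taylor_X_pow_card_sub_X (α : F) : taylor α Λ = Λ := by
  rw [map_sub, taylor_X_pow, taylor_X, ← FiniteField.expand_card]
  simp

lemma eval_modByMonic_X_pow_card_sub_X (p : F[X]) (α : F) : (p %ₘ Λ).eval α = p.eval α := by
  conv_rhs => rw [← modByMonic_add_div p Λ]
  rw [eval_add, eval_mul, eval_X_pow_card_sub_X, zero_mul, add_zero]

lemma pdegLE_of_card_le {k : ℕ} (hk : Fintype.card F ≤ k) (A : F[X]) :
    PdegLE (Fintype.card F) A k := fun _ =>
  (degree_modByMonic_lt _ monic_X_pow_card_sub_X).le.trans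
    (degree_X_pow_card_sub_X.trans_le (by exact_mod_cast hk))

lemma pdegLE_of_forall_eval_eq {A : F[X]} {k : ℕ}
    (h : ∀ ℓ, ∃ R : F[X], R.degree ≤ k ∧ ∀ α, (hasseDeriv ℓ A).eval α = R.eval α) :
    PdegLE (Fintype.card F) A k := by
  intro ℓ
  obtain ⟨R, hRk, hR⟩ := h ℓ
  have hdeg : ∀ p : F[X], (p %ₘ Λ).degree < Fintype.card F := fun p =>
    (degree_modByMonic_lt _ monic_X_pow_card_sub_X).trans_eq degree_X_pow_card_sub_X
  have heq : hasseDeriv ℓ A %ₘ Λ = R %ₘ Λ :=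
    eq_of_degree_sub_lt_of_eval_finset_eq univ
      ((degree_sub_le _ _).trans_lt (max_lt (hdeg _) (hdeg _)))
      (fun α _ => by simp only [eval_modByMonic_X_pow_card_sub_X, hR])
  exact heq ▸ degree_modByMonic_le_left.trans hRk

lemma pdegLE_sum_mul_pow {N k : ℕ} {a : Fin N → F[X]} (ha : ∀ i, (a i).degree ≤ k) :
    PdegLE (Fintype.card F) (∑ i, a i * Λ ^ (i : ℕ)) k := by
  refine pdegLE_of_forall_eval_eq fun ℓ => ⟨∑ i : Fin N, ∑ xy ∈ antidiagonal ℓ,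
    (Λ ^ (i : ℕ)).coeff xy.2 • hasseDeriv xy.1 (a i), ?_, fun α => ?_⟩
  · rw [← mem_degreeLE]
    exact Submodule.sum_mem _ fun i _ => Submodule.sum_mem _ fun xy _ =>
      Submodule.smul_mem _ _ (mem_degreeLE.2 ((degree_hasseDeriv_le _ _).trans (ha i)))
  · simp only [map_sum, eval_finsetSum]
    refine Finset.sum_congr rfl fun i _ => ?_
    rw [eval_hasseDeriv_mul_of_taylor_eq (by rw [taylor_pow, taylor_X_pow_card_sub_X]),
      eval_finsetSum]

lemma eq_zero_of_forall_eval_hasseDeriv_eq_zero {H : F[X]} {M : ℕ}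
    (hdeg : H.degree < (M * Fintype.card F : ℕ))
    (hvan : ∀ α, ∀ ℓ < M, (hasseDeriv ℓ H).eval α = 0) :
    H = 0 := by
  classical
  by_contra hH
  have hmult : ∀ α, M ≤ H.rootMultiplicity α := fun α => by
    rw [rootMultiplicity_eq_natTrailingDegree, ← taylor_apply]
    exact le_natTrailingDegree (by rwa [Ne, taylor_eq_zero]) fun ℓ hℓ => by
      rw [taylor_coeff]; exact hvan α ℓ hℓ
  have hroots : M • (univ.val : Multiset F) ≤ H.roots :=
    Multiset.le_iff_count.2 fun α => by simpa [count_roots] using hmult α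
  have hcard : M * Fintype.card F ≤ H.natDegree := by
    simpa using (Multiset.card_le_card hroots).trans (card_roots' H)
  exact absurd ((natDegree_lt_iff_degree_lt hH).2 hdeg) (not_lt.2 hcard)

/- Reducing the Hasse derivatives modulo `Λ` bounds the degree by `k + h` without changing the
values on `𝔽_q`. -/
noncomputable def twistedDefect (U V : ℕ → F[X]) (ℓ : ℕ) : F[X] × F[X] →ₗ[F] F[X] :=
  ∑ xy ∈ antidiagonal ℓ,
    (LinearMap.mulRight F (U xy.2) ∘ₗ modByMonicHom Λ ∘ₗ hasseDeriv xy.1 ∘ₗ LinearMap.fst F _ _ -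
      LinearMap.mulRight F (V xy.2) ∘ₗ modByMonicHom Λ ∘ₗ hasseDeriv xy.1 ∘ₗ LinearMap.snd F _ _)

lemma twistedDefect_apply (U V : ℕ → F[X]) (ℓ : ℕ) (A B : F[X]) :
    twistedDefect U V ℓ (A, B) = ∑ xy ∈ antidiagonal ℓ,
      ((hasseDeriv xy.1 A %ₘ Λ) * U xy.2 - (hasseDeriv xy.1 B %ₘ Λ) * V xy.2) := by
  simp [twistedDefect]

lemma degree_twistedDefect_le {U V : ℕ → F[X]} {h k M ℓ : ℕ}
    (hU : ∀ y < M, (U y).degree ≤ h) (hV : ∀ y < M, (V y).degree ≤ h)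
    {A B : F[X]} (hA : PdegLE (Fintype.card F) A k) (hB : PdegLE (Fintype.card F) B k)
    (hℓ : ℓ < M) :
    (twistedDefect U V ℓ (A, B)).degree ≤ (k + h : ℕ) := by
  rw [twistedDefect_apply, ← mem_degreeLE]
  refine Submodule.sum_mem _ fun xy hxy => Submodule.sub_mem _ ?_ ?_
  all_goals
    have hy : xy.2 < M := (le_of_add_le_right (mem_antidiagonal.1 hxy).le).trans_lt hℓ
    refine mem_degreeLE.2 ((degree_mul_le _ _).trans ?_)
    push_cast
  · exact add_le_add (hA _) (hU _ hy)
  · exact add_le_add (hB _) (hV _ hy)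

lemma eval_hasseDeriv_mul_sub_mul {r : F → F} {M : ℕ} {P Q : F[X]} {U V : ℕ → F[X]}
    (hU : ∀ y < M, ∀ α, (hasseDeriv y P).eval α = r α * (U y).eval α)
    (hV : ∀ y < M, ∀ α, (hasseDeriv y Q).eval α = r α * (V y).eval α)
    {ℓ : ℕ} (hℓ : ℓ < M) (A B : F[X]) (α : F) :
    (hasseDeriv ℓ (A * P - B * Q)).eval α = r α * (twistedDefect U V ℓ (A, B)).eval α := by
  rw [twistedDefect_apply, map_sub, hasseDeriv_mul, hasseDeriv_mul, ← sum_sub_distrib]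
  simp only [eval_finsetSum, mul_sum]
  refine sum_congr rfl fun xy hxy => ?_
  have hy : xy.2 < M := (le_of_add_le_right (mem_antidiagonal.1 hxy).le).trans_lt hℓ
  simp only [eval_sub, eval_mul, eval_modByMonic_X_pow_card_sub_X, hU _ hy, hV _ hy]
  ring

lemma exists_pdegLE_twistedDefect_eq_zero {U V : ℕ → F[X]} {h k M N : ℕ}
    (hU : ∀ y < M, (U y).degree ≤ h) (hV : ∀ y < M, (V y).degree ≤ h)
    (hk : k < Fintype.card F) (hdim : M * (k + h + 1) < 2 * (N * (k + 1))) :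
    ∃ A B : F[X], ¬(A = 0 ∧ B = 0) ∧
      A.degree < (N * Fintype.card F : ℕ) ∧ B.degree < (N * Fintype.card F : ℕ) ∧
      PdegLE (Fintype.card F) A k ∧ PdegLE (Fintype.card F) B k ∧
      ∀ ℓ < M, twistedDefect U V ℓ (A, B) = 0 := by
  let E : (Fin N → F[X]_(k + 1)) →ₗ[F] F[X] :=
    ∑ i : Fin N, LinearMap.mulRight F (Λ ^ (i : ℕ)) ∘ₗ (degreeLT F (k + 1)).subtype ∘ₗ
      LinearMap.proj i
  have hE : ∀ a, E a = ∑ i, (a i : F[X]) * Λ ^ (i : ℕ) := by simp [E]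
  have hle : ∀ (a : Fin N → F[X]_(k + 1)) i, (a i : F[X]).degree ≤ k := fun a i =>
    Order.le_of_lt_succ (mem_degreeLT.1 (a i).2)
  have hlt : ∀ (a : Fin N → F[X]_(k + 1)) i, (a i : F[X]).degree < degree Λ := fun a i =>
    (hle a i).trans_lt (by rw [degree_X_pow_card_sub_X]; exact_mod_cast hk)
  have hpdeg : ∀ a, PdegLE (Fintype.card F) (E a) k := fun a => hE a ▸ pdegLE_sum_mul_pow (hle a)
  have hdeg : ∀ a, (E a).degree < (N * Fintype.card F : ℕ) := fun a => by
    simpa [hE, FiniteField.X_pow_card_sub_X_natDegree_eq F (Fintype.one_lt_card (α := F))]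
      using degree_sum_mul_pow_lt (hlt a)
  have hinj : Function.Injective E := by
    refine (injective_iff_map_eq_zero E).2 fun a ha => funext fun i => Subtype.ext ?_
    exact congrFun (eq_zero_of_sum_mul_pow_eq_zero (hlt a) (hE a ▸ ha)) i
  obtain ⟨v, hv0, hv⟩ := exists_ne_zero_forall_eq_zero_of_degree_le
    (fun ℓ : Fin M => twistedDefect U V ℓ ∘ₗ E.prodMap E) (d := k + h)
    (fun ℓ v => degree_twistedDefect_le hU hV (hpdeg v.1) (hpdeg v.2) ℓ.2) (by
      simpa [Module.finrank_pi_fintype, Module.finrank_eq_card_basis (degreeLT.basis F (k + 1)),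
        two_mul] using hdim)
  refine ⟨E v.1, E v.2, fun h0 => hv0 ?_, hdeg _, hdeg _, hpdeg _, hpdeg _, fun ℓ hℓ => hv ⟨ℓ, hℓ⟩⟩
  exact Prod.ext (hinj (h0.1.trans E.map_zero.symm)) (hinj (h0.2.trans E.map_zero.symm))

lemma mul_eq_mul_of_twistedDefect_eq_zero {r : F → F} {M : ℕ} {P Q A B : F[X]} {U V : ℕ → F[X]}
    (hU : ∀ y < M, ∀ α, (hasseDeriv y P).eval α = r α * (U y).eval α)
    (hV : ∀ y < M, ∀ α, (hasseDeriv y Q).eval α = r α * (V y).eval α)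
    (hdeg : (A * P - B * Q).degree < (M * Fintype.card F : ℕ))
    (hW : ∀ ℓ < M, twistedDefect U V ℓ (A, B) = 0) :
    A * P = B * Q := by
  refine sub_eq_zero.1 (eq_zero_of_forall_eval_hasseDeriv_eq_zero hdeg fun α ℓ hℓ => ?_)
  rw [eval_hasseDeriv_mul_sub_mul hU hV hℓ, hW ℓ hℓ, eval_zero, mul_zero]

lemma exists_mul_eq_mul_of_card_le {c M k : ℕ} {P Q : F[X]} (hk : Fintype.card F ≤ k)
    (hcM : c < M) (hP : P.degree < (c * Fintype.card F : ℕ))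
    (hQ : Q.degree < (c * Fintype.card F : ℕ)) :
    ∃ A B : F[X], ¬(A = 0 ∧ B = 0) ∧
      A.degree < (M * Fintype.card F : ℕ) ∧ B.degree < (M * Fintype.card F : ℕ) ∧
      PdegLE (Fintype.card F) A k ∧ PdegLE (Fintype.card F) B k ∧ A * P = B * Q := by
  have hcq : ((c * Fintype.card F : ℕ) : WithBot ℕ) ≤ (M * Fintype.card F : ℕ) := by
    exact_mod_cast Nat.mul_le_mul_right _ hcM.le
  by_cases hP0 : P = 0
  · refine ⟨1, 0, by simp, ?_, WithBot.bot_lt_coe _, pdegLE_of_card_le hk _,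
      pdegLE_of_card_le hk _, by simp [hP0]⟩
    rw [degree_one]
    exact_mod_cast Nat.mul_pos (by omega) Fintype.card_pos
  · exact ⟨Q, P, fun h => hP0 h.2, hQ.trans_le hcq, hP.trans_le hcq, pdegLE_of_card_le hk _,
      pdegLE_of_card_le hk _, mul_comm Q P⟩

end FiniteField

theorem stmt14_general {F : Type*} [Field F] [Fintype F] (q : ℕ) (hq : Fintype.card F = q)
    (c h M : ℕ)
    (hcM : (c : ℝ) < (M : ℝ) / 2)
    (r : F → F) (Fp Gp : F[X])
    (hFdeg : Fp.degree < ((c * q : ℕ) : WithBot ℕ))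
    (hGdeg : Gp.degree < ((c * q : ℕ) : WithBot ℕ))
    (hFtw : Twisted r h M Fp) (hGtw : Twisted r h M Gp)
    (k : ℕ) (hk : (M : ℝ) / ((M : ℝ) - 2 * (c : ℝ)) * ((h : ℝ) + 1) < (k : ℝ)) :
    ∃ A B : F[X], ¬(A = 0 ∧ B = 0) ∧
      A.degree < ((M * q : ℕ) : WithBot ℕ) ∧ B.degree < ((M * q : ℕ) : WithBot ℕ) ∧
      PdegLE q A k ∧ PdegLE q B k ∧
      A * Fp = B * Gp := by
  subst hq
  have h2c : 2 * c < M := by exact_mod_cast (by push_cast; linarith : ((2 * c : ℕ) : ℝ) < M)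
  rcases le_or_gt (Fintype.card F) k with hqk | hkq
  · exact exists_mul_eq_mul_of_card_le hqk (by omega) hFdeg hGdeg
  have hdim : M * (k + h + 1) < 2 * ((M - c) * (k + 1)) := by
    rw [div_mul_eq_mul_div, div_lt_iff₀ (by linarith)] at hk
    have : ((M * (k + h + 1) : ℕ) : ℝ) < ((2 * ((M - c) * (k + 1)) : ℕ) : ℝ) := by
      push_cast [Nat.cast_sub (by omega : c ≤ M)]
      nlinarith
    exact_mod_cast this
  obtain ⟨U, hU⟩ := hFtw.exists_fun
  obtain ⟨V, hV⟩ := hGtw.exists_fun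
  obtain ⟨A, B, hAB, hA, hB, hApdeg, hBpdeg, hW⟩ :=
    exists_pdegLE_twistedDefect_eq_zero (fun y hy => (hU y hy).1) (fun y hy => (hV y hy).1)
      hkq hdim
  have hNM : ((M - c) * Fintype.card F : ℕ) ≤ (M * Fintype.card F : ℕ) :=
    Nat.mul_le_mul_right _ (Nat.sub_le M c)
  have hdeg : (A * Fp - B * Gp).degree < (M * Fintype.card F : ℕ) := by
    rw [← Nat.sub_add_cancel (by omega : c ≤ M), add_mul]
    exact (degree_sub_le _ _).trans_lt
      (max_lt (degree_mul_lt_of_lt_of_le hA hFdeg.le) (degree_mul_lt_of_lt_of_le hB hGdeg.le))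
  refine ⟨A, B, hAB, hA.trans_le (by exact_mod_cast hNM), hB.trans_le (by exact_mod_cast hNM),
    hApdeg, hBpdeg, mul_eq_mul_of_twistedDefect_eq_zero (fun y hy => (hU y hy).2)
      (fun y hy => (hV y hy).2) hdeg hW⟩

/-- Let `c, h, M` be positive with `c < M/2`, and let `F, G ∈ 𝔽_q[X]`
of degree `< cq` both be `r`-twisted `(h, M)`-pseudopolynomials. Let
`k > (M/(M-2c))·(h+1)`. Then there exist `A, B ∈ 𝔽_q[X]`, not both zero, each of degree
`< Mq` and pseudodegree at most `k`, with `A·F = B·G`. -/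
theorem stmt14 {F : Type*} [Field F] [Fintype F] (q : ℕ) (hq : Fintype.card F = q)
    (c h M : ℕ) (hc : 0 < c) (hh : 0 < h) (hM : 0 < M)
    (hcM : (c : ℝ) < (M : ℝ) / 2)
    (r : F → F) (Fp Gp : F[X])
    (hFdeg : Fp.degree < ((c * q : ℕ) : WithBot ℕ))
    (hGdeg : Gp.degree < ((c * q : ℕ) : WithBot ℕ))
    (hFtw : Twisted r h M Fp) (hGtw : Twisted r h M Gp)
    (k : ℕ) (hk : (M : ℝ) / ((M : ℝ) - 2 * (c : ℝ)) * ((h : ℝ) + 1) < (k : ℝ)) :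
    ∃ A B : F[X], ¬(A = 0 ∧ B = 0) ∧
      A.degree < ((M * q : ℕ) : WithBot ℕ) ∧ B.degree < ((M * q : ℕ) : WithBot ℕ) ∧
      PdegLE q A k ∧ PdegLE q B k ∧
      A * Fp = B * Gp :=
  stmt14_general q hq c h M hcM r Fp Gp hFdeg hGdeg hFtw hGtw k hk
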